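/- arXiv:2211.02049 — 3 statements merged into one kernel-verified Lean document; each statement's English description precedes it below -/
import Mathlib

section
/- For complex numbers a, c with a and c not nonpositive integers, the limit as n → ∞ of n^{c-a} · (a)_n/(c)_n equals Γ(c)/Γ(a). -/
open Filter Topology

/-- The Pochhammer symbol `(a)_n = a(a+1)⋯(a+n-1)`. -/
noncomputable def poch (a : ℂ) (n : ℕ) : ℂ := Polynomial.eval a (ascPochhammer ℂ n)

/-- `z` is not a nonpositive integer. -/
def NotNonposInt (z : ℂ) : Prop := ∀ m : ℕ, z ≠ -(m : ℂ)

/-!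
Euler's limit `Γ(s) = lim n^s n! / (s)_{n+1}` (`Complex.GammaSeq_tendsto_Gamma`) gives
`Γ(c)/Γ(a)` as the limit of `n^{c-a} (a)_{n+1}/(c)_{n+1}`, the factorials cancelling. This differs
from the sequence in question by the factor `(a+n)/(c+n) → 1`.
-/

lemma poch_succ (a : ℂ) (n : ℕ) : poch a (n + 1) = poch a n * (a + n) :=
  ascPochhammer_succ_eval n a

lemma poch_eq_prod_range (a : ℂ) (n : ℕ) : poch a n = ∏ j ∈ Finset.range n, (a + j) := by
  induction n with
  | zero => simp [poch]
  | succ n ih => rw [poch_succ, ih, Finset.prod_range_succ]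

lemma Complex.GammaSeq_eq_poch (s : ℂ) (n : ℕ) :
    GammaSeq s n = (n : ℂ) ^ s * n.factorial / poch s (n + 1) := by
  rw [GammaSeq, poch_eq_prod_range]

lemma Complex.GammaSeq_div_GammaSeq (a c : ℂ) {n : ℕ} (hn : n ≠ 0) :
    GammaSeq c n / GammaSeq a n = (n : ℂ) ^ (c - a) * (poch a (n + 1) / poch c (n + 1)) := by
  have hn' : (n : ℂ) ≠ 0 := Nat.cast_ne_zero.mpr hn
  have hfac : (n.factorial : ℂ) ≠ 0 := Nat.cast_ne_zero.mpr n.factorial_ne_zero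
  have hpow : (n : ℂ) ^ a ≠ 0 := fun h => hn' ((Complex.cpow_eq_zero_iff _ _).mp h).1
  rw [GammaSeq_eq_poch, GammaSeq_eq_poch, Complex.cpow_sub _ _ hn']
  field_simp

theorem poch_ratio_limit_general (a c : ℂ) (ha : NotNonposInt a) :
    Tendsto (fun n : ℕ => (n : ℂ) ^ (c - a) * (poch a n / poch c n)) atTop
      (nhds (Complex.Gamma c / Complex.Gamma a)) := by
  have hshift : Tendsto (fun n : ℕ => (a + n) / (c + n)) atTop (𝓝 1) := by
    simpa using tendsto_add_mul_div_add_mul_atTop_nhds a c (1 : ℂ) one_ne_zero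
  have heuler : Tendsto (fun n : ℕ => (n : ℂ) ^ (c - a) * (poch a n / poch c n) *
      ((a + n) / (c + n))) atTop (𝓝 (Complex.Gamma c / Complex.Gamma a)) := by
    refine ((Complex.GammaSeq_tendsto_Gamma c).div (Complex.GammaSeq_tendsto_Gamma a)
      (Complex.Gamma_ne_zero ha)).congr' ?_
    filter_upwards [eventually_ne_atTop 0] with n hn
    rw [Pi.div_apply, Complex.GammaSeq_div_GammaSeq a c hn, poch_succ, poch_succ,
      mul_div_mul_comm, mul_assoc]
  rw [← mul_one (Complex.Gamma c / Complex.Gamma a)] at heuler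
  exact (tendsto_mul_iff_of_ne_zero hshift one_ne_zero).mp heuler

theorem poch_ratio_limit (a c : ℂ) (ha : NotNonposInt a) (hc : NotNonposInt c) :
    Tendsto (fun n : ℕ => (n : ℂ) ^ (c - a) * (poch a n / poch c n)) atTop
      (nhds (Complex.Gamma c / Complex.Gamma a)) :=
  poch_ratio_limit_general a c ha
end

section
/- For complex numbers a, c and natural number n, the contiguous relation c·(a)_n/(c)_n − a·(a+1)_n/(c+1)_n + (a−c)·(a)_n/(c+1)_n = 0 holds, provided c and c+1 are not equal to any of 0, −1, ..., −(n−1) (so denominators are nonzero). -/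
theorem mul_ascPochhammer_eval_add_one {S : Type*} [CommSemiring S] (n : ℕ) (a : S) :
    a * (ascPochhammer S n).eval (a + 1) = (ascPochhammer S n).eval a * (a + n) := by
  rw [← ascPochhammer_succ_eval, ascPochhammer_succ_left, Polynomial.eval_mul,
    Polynomial.eval_X, Polynomial.eval_comp, Polynomial.eval_add, Polynomial.eval_X,
    Polynomial.eval_one]

theorem poch_ne_zero {c : ℂ} {n : ℕ} (h : ∀ j : ℕ, j < n → c ≠ -(j : ℂ)) : poch c n ≠ 0 := by
  intro hzero
  obtain ⟨j, hj, hjc⟩ := (ascPochhammer_eval_eq_zero_iff n c).1 hzero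
  exact h j hj (by rw [hjc, neg_neg])

theorem contiguous_relation_coeff (a c : ℂ) (n : ℕ)
    (hc : ∀ j : ℕ, j < n → c ≠ -(j : ℂ)) (hc1 : ∀ j : ℕ, j < n → c + 1 ≠ -(j : ℂ)) :
    c * (poch a n / poch c n) - a * (poch (a + 1) n / poch (c + 1) n) +
      (a - c) * (poch a n / poch (c + 1) n) = 0 := by
  have hc_ne := poch_ne_zero hc
  have hc1_ne := poch_ne_zero hc1
  have shift_a : a * poch (a + 1) n = poch a n * (a + n) := mul_ascPochhammer_eval_add_one n a
  have shift_c : c * poch (c + 1) n = poch c n * (c + n) := mul_ascPochhammer_eval_add_one n c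
  -- Both shifts turn the cleared relation into `(a)_n (c)_n ((c + n) - (a + n) + (a - c)) = 0`.
  field_simp
  linear_combination poch a n * shift_c - poch c n * shift_a
end

section
/- Let a ∈ ℂ not a nonpositive integer and n ∈ ℕ, and let f(x) = Σ_k f_k x^k be a power series convergent for |x| < R. Then for |x| < R, Σ_k ((a+n)_k/(a)_k) f_k x^k = (1/(a)_n) · Σ_k (a+k)(a+k+1)···(a+k+n−1) f_k x^k; that is, the hypergeometrization H^{a+n}_a equals the differential operator (a + x d/dx)_n/(a)_n, where (a + x d/dx)_n = (a + x d/dx)(a+1 + x d/dx)···(a+n−1 + x d/dx). -/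
lemma poch_mul (a : ℂ) (n m : ℕ) : poch a n * poch (a + n) m = poch a (n + m) := by
  have := congrArg (Polynomial.eval a) (ascPochhammer_mul (S := ℂ) n m)
  simpa [poch, Polynomial.eval_comp] using this

lemma poch_ne_zero_s5 (a : ℂ) (ha : NotNonposInt a) (n : ℕ) : poch a n ≠ 0 := by
  induction n with
  | zero => simp [poch]
  | succ k ih =>
      have : poch a (k + 1) = poch a k * (a + k) := by
        simp [poch, ascPochhammer_succ_right]

      rw [this]
      refine mul_ne_zero ih ?_
      intro h
      exact ha k (by linear_combination h)

theorem hypergeometrization_as_differential_operator (a : ℂ) (n : ℕ)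
    (ha : NotNonposInt a) (f : ℕ → ℂ) (R : ℝ) (hR : 0 < R)
    (hf : ∀ x : ℂ, ‖x‖ < R → Summable (fun k : ℕ => f k * x ^ k)) :
    ∀ x : ℂ, ‖x‖ < R →
      ∑' k : ℕ, poch (a + n) k / poch a k * f k * x ^ k =
        (1 / poch a n) * ∑' k : ℕ, poch (a + k) n * f k * x ^ k := by
  intro x hx
  rw [← tsum_mul_left]
  refine tsum_congr fun k => ?_
  have hk := poch_ne_zero_s5 a ha k
  have hn := poch_ne_zero_s5 a ha n
  have key : poch (a + n) k / poch a k = poch (a + k) n / poch a n := by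
    rw [div_eq_div_iff hk hn]
    have h1 := poch_mul a n k
    have h2 := poch_mul a k n
    rw [add_comm n k] at h1
    have : poch a n * poch (a + n) k = poch a k * poch (a + k) n := by
      rw [h1, h2]
    linear_combination this
  rw [key]
  ring
end
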